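/- Fix an alphabet Σ. Regard a labelled transition system with explicit termination as a coalgebra γ : X → Set (Unit ⊕ Σ × X). Let M X = Set (List Σ × (X ⊕ Unit)) with unit η_X(x) = {([], Sum.inl x)} and Kleisli extension f*(S) = {(u ++ v, b) | ∃ x, (u, Sum.inl x) ∈ S ∧ (v, b) ∈ f x} ∪ {(u, Sum.inr ⋆) | (u, Sum.inr ⋆) ∈ S}; define α_X : Set (Unit ⊕ Σ × X) → M X by α_X(S) = {([], Sum.inr ⋆) | Sum.inl ⋆ ∈ S} ∪ {([a], Sum.inl x) | Sum.inr (a, x) ∈ S}. Define γ^(0) = η_X, γ^(n+1) = (α_X ∘ γ)* ∘ γ^(n). Then for every state x and every n: γ^(n)(x) = {(u, Sum.inr ⋆) | u.length < n ∧ ∃ z, x →^u z ∧ Sum.inl ⋆ ∈ γ(z)} ∪ {(u, Sum.inl z) | u.length = n ∧ x →^u z}, where x →^u z is defined by x →^[] x, and x →^(a::u) z iff ∃ w, Sum.inr (a, w) ∈ γ(x) ∧ w →^u z. -/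
import Mathlib


variable {A : Type*}

/-- Unit of the monad `M X = Set (List A × (X ⊕ Unit))`. -/
def tEta {X : Type*} (x : X) : Set (List A × (X ⊕ Unit)) := {([], Sum.inl x)}

/-- Kleisli extension for `M X = Set (List A × (X ⊕ Unit))`. -/
def tStar {X Y : Type*} (f : X → Set (List A × (Y ⊕ Unit)))
    (S : Set (List A × (X ⊕ Unit))) : Set (List A × (Y ⊕ Unit)) :=
  {p | ∃ u v x b, p = (u ++ v, b) ∧ (u, Sum.inl x) ∈ S ∧ (v, b) ∈ f x} ∪
  {p | ∃ u, p = (u, Sum.inr ()) ∧ (u, Sum.inr ()) ∈ S}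

/-- Trace semantics for LTS with explicit termination:
`α S = {([], ✓) | ✓ ∈ S} ∪ {([a], x) | (a, x) ∈ S}`. -/
def tAlpha {X : Type*} (S : Set (Unit ⊕ A × X)) : Set (List A × (X ⊕ Unit)) :=
  {p | p = ([], Sum.inr ()) ∧ Sum.inl () ∈ S} ∪
  {p | ∃ a x, p = ([a], Sum.inl x) ∧ Sum.inr (a, x) ∈ S}

/-- Iterates `γ⁽⁰⁾ = η`, `γ⁽ⁿ⁺¹⁾ = (α ∘ γ)* ∘ γ⁽ⁿ⁾`. -/
def tIter {X : Type*} (γ : X → Set (Unit ⊕ A × X)) :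
    ℕ → X → Set (List A × (X ⊕ Unit))
  | 0 => tEta
  | n + 1 => tStar (tAlpha ∘ γ) ∘ tIter γ n

/-- Extended transition relation of an LTS with explicit termination. -/
inductive TSteps {X : Type*} (γ : X → Set (Unit ⊕ A × X)) : X → List A → X → Prop
  | nil (x : X) : TSteps γ x [] x
  | cons {x w z : X} {a : A} {u : List A} :
      Sum.inr (a, w) ∈ γ x → TSteps γ w u z → TSteps γ x (a :: u) z

lemma tsteps_snoc {X : Type*} {γ : X → Set (Unit ⊕ A × X)} {x w z : X} {u : List A} {a : A}
    (h : TSteps γ x u w) (h2 : Sum.inr (a, z) ∈ γ w) : TSteps γ x (u ++ [a]) z := by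
  induction h with
  | nil => exact TSteps.cons h2 (TSteps.nil z)
  | cons hs _ ih => exact TSteps.cons hs (ih h2)

lemma tsteps_snoc_inv {X : Type*} {γ : X → Set (Unit ⊕ A × X)} {x z : X} {u : List A} {a : A}
    (h : TSteps γ x (u ++ [a]) z) : ∃ w, TSteps γ x u w ∧ Sum.inr (a, z) ∈ γ w := by
  induction u generalizing x with
  | nil =>
    cases h with
    | cons hs h' => cases h'; exact ⟨x, TSteps.nil x, hs⟩
  | cons b v ih =>
    cases h with
    | cons hs h' =>
      obtain ⟨w, hw, hz⟩ := ih h'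
      exact ⟨w, TSteps.cons hs hw, hz⟩

/-- the iterates of an LTS with explicit termination consist of the
terminated traces of length `< n` and the live pretraces of length exactly `n`. -/
theorem stmt7 {X : Type*} (γ : X → Set (Unit ⊕ A × X)) (x : X) (n : ℕ) :
    tIter γ n x =
      {p | ∃ u, p = (u, Sum.inr ()) ∧ u.length < n ∧
            ∃ z, TSteps γ x u z ∧ Sum.inl () ∈ γ z} ∪
      {p | ∃ u z, p = (u, Sum.inl z) ∧ u.length = n ∧ TSteps γ x u z} := by
  induction n with
  | zero =>
    ext p
    simp only [tIter, tEta, Set.mem_singleton_iff, Set.mem_union, Set.mem_setOf_eq]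
    constructor
    · rintro rfl
      exact Or.inr ⟨[], x, rfl, rfl, TSteps.nil x⟩
    · rintro (⟨u', _, h3, _⟩ | ⟨u', z, rfl, hlen, hst⟩)
      · omega
      · rw [List.length_eq_zero_iff] at hlen; subst hlen
        cases hst
        rfl
  | succ n ih =>
    ext p
    simp only [tIter, Function.comp_apply, ih, tStar, tAlpha, Set.mem_union,
      Set.mem_setOf_eq]
    constructor
    · rintro (⟨u', v, y, b', rfl, hS, hf⟩ | ⟨u', rfl, hS⟩)
      · -- the live-extension part
        rcases hS with ⟨w, heq, _⟩ | ⟨w, z, heq, hlen, hst⟩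
        · simp only [Prod.mk.injEq] at heq
          exact absurd heq.2 (by simp)
        · simp only [Prod.mk.injEq] at heq
          obtain ⟨rfl, hy⟩ := heq
          cases hy
          rcases hf with ⟨hv, hacc⟩ | ⟨a, w', hv, htr⟩
          · simp only [Prod.mk.injEq] at hv
            obtain ⟨rfl, rfl⟩ := hv
            exact Or.inl ⟨u' ++ [], rfl, by simp; omega, y, by simpa using hst, hacc⟩
          · simp only [Prod.mk.injEq] at hv
            obtain ⟨rfl, rfl⟩ := hv
            exact Or.inr ⟨u' ++ [a], w', rfl, by simp [hlen], tsteps_snoc hst htr⟩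
      · rcases hS with ⟨w, heq, hlen, z, hst, hacc⟩ | ⟨w, z, heq, _, _⟩
        · simp only [Prod.mk.injEq] at heq
          obtain ⟨rfl, _⟩ := heq
          exact Or.inl ⟨u', rfl, by omega, z, hst, hacc⟩
        · simp only [Prod.mk.injEq] at heq
          exact absurd heq.2 (by simp)
    · rintro (⟨u', rfl, hlen, z, hst, hacc⟩ | ⟨u', z, rfl, hlen, hst⟩)
      · rcases Nat.lt_succ_iff_lt_or_eq.mp hlen with hlt | heq
        · exact Or.inr ⟨u', rfl, Or.inl ⟨u', rfl, hlt, z, hst, hacc⟩⟩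
        · refine Or.inl ⟨u', [], z, Sum.inr (), by simp,
            Or.inr ⟨u', z, rfl, heq, hst⟩, Or.inl ⟨rfl, hacc⟩⟩
      · have hne : u' ≠ [] := by intro h; subst h; simp at hlen
        obtain rfl | ⟨v, a, rfl⟩ := u'.eq_nil_or_concat
        · exact absurd rfl hne
        rw [List.concat_eq_append] at hst hlen ⊢
        obtain ⟨w, hw, hz⟩ := tsteps_snoc_inv hst
        refine Or.inl ⟨v, [a], w, Sum.inl z, rfl,
          Or.inr ⟨v, w, rfl, by simp at hlen; omega, hw⟩,
          Or.inr ⟨a, z, rfl, hz⟩⟩
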